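/- Let a ≥ 2 and let w₁, w₂, w₃, w₄, w₅ be complex numbers (edge weights). Let M be the (a+4)×(a+4) symmetric complex matrix, indexed by u = 0, v = 1, w = 2, pendant vertices 3,…,a+2, and b = a+3, with M 0 1 = M 1 0 = w₁, M 0 2 = M 2 0 = w₂, M 0 j = M j 0 = w₃ for 3 ≤ j ≤ a+2, M 1 2 = M 2 1 = w₄, M 1 (a+3) = M (a+3) 1 = w₅, and all other entries 0 (this is the weighted adjacency matrix of the graph obtained from K₃ by attaching a pendant vertices at one vertex and one pendant vertex at another). Let P be the characteristic matrix of the partition {{0},{1},{2},{3,…,a+2},{a+3}} and let Q = !![0, w₁, w₂, a*w₃, 0; w₁, 0, w₄, 0, w₅; w₂, w₄, 0, 0, 0; w₃, 0, 0, 0, 0; 0, w₅, 0, 0, 0]. Then M * P = P * Q, M.charpoly = X^(a−1) * Q.charpoly, and spectrum ℂ M = spectrum ℂ Q; hence the equitable quotient matrix Q of order 5 contains all the distinct eigenvalues of the weighted adjacency matrix M. -/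

import Mathlib

/-!
Every entry of `M` depends only on the cells of its row and column: `M i j = A (cell i) (cell j)`
for the symmetric matrix `A` of weights between cells. Hence `M * P = P * (A * D)` with `D` the
diagonal matrix of cell sizes, and `A * D` is the given `Q`. Vertices in a common cell have equal
columns, so the `a - 1` vectors `e_j - e_3` (for the pendant vertices `j ≠ 3`) lie in the kernel
of `M`; together with the columns of `P` they form a basis, in which `M` becomes
`fromBlocks Q 0 0 0`. This gives `charpoly M = X ^ (a - 1) * charpoly Q`. The only possible new
eigenvalue is `0`, and `Q` is already singular since its columns 2, 3, 4 lie in `span {e₀, e₁}`.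
-/

open Polynomial Matrix Finset

namespace Matrix

section Partition

variable {n m : Type*} [DecidableEq m]

def partitionMatrix (R : Type*) [Zero R] [One R] (f : n → m) : Matrix n m R :=
  of fun i j => if f i = j then 1 else 0

variable {R : Type*} [CommRing R] (f : n → m)

theorem partitionMatrix_mul [Fintype m] {l : Type*} (Q : Matrix m l R) :
    partitionMatrix R f * Q = Q.submatrix f id := by
  ext i j
  simp [partitionMatrix, mul_apply]

variable [Fintype n]

theorem submatrix_mul_partitionMatrix [Fintype m] (A : Matrix m m R) :
    A.submatrix f f * partitionMatrix R f =
      partitionMatrix R f * (A * diagonal fun j => (#{i | f i = j} : R)) := by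
  ext i j
  rw [partitionMatrix_mul, submatrix_apply, id, mul_diagonal, mul_apply]
  simp only [partitionMatrix, submatrix_apply, of_apply, mul_ite, mul_one, mul_zero, ← sum_filter]
  rw [sum_congr rfl fun x hx => by rw [(mem_filter.1 hx).2], sum_const, nsmul_eq_mul, mul_comm]

theorem transpose_partitionMatrix_mul_self :
    (partitionMatrix R f)ᵀ * partitionMatrix R f = diagonal fun j => (#{i | f i = j} : R) := by
  ext j j'
  simp only [partitionMatrix, mul_apply, transpose_apply, of_apply, mul_boole, diagonal_apply]
  split_ifs with h
  · subst h
    simp +contextual [sum_boole]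
  · exact sum_eq_zero fun x _ => by grind

end Partition

section FiberDiff

variable {n m R : Type*} [Fintype n] [DecidableEq n] [CommRing R] {f : n → m} {s : m → n}

/-- Its columns `e_x - e_{s (f x)}`, for `x` outside the range of the section `s`, lie in the
kernel of every blown-up matrix `A.submatrix f f` and complete the columns of `partitionMatrix R f`
to a basis. -/
def fiberDiffMatrix (R : Type*) [Zero R] [One R] [Sub R] (f : n → m) (s : m → n) :
    Matrix n ↥(Set.range s)ᶜ R :=
  of fun i x => (Pi.single x.1 1 - Pi.single (s (f x)) 1 : n → R) i

theorem submatrix_mul_fiberDiffMatrix (hs : Function.RightInverse s f) (A : Matrix m m R) :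
    A.submatrix f f * fiberDiffMatrix R f s = 0 := by
  ext i x
  simp [fiberDiffMatrix, mul_apply, mul_sub, sum_sub_distrib, Pi.single_apply, hs (f x)]

variable [DecidableEq m]

theorem transpose_partitionMatrix_mul_fiberDiffMatrix (hs : Function.RightInverse s f) :
    (partitionMatrix R f)ᵀ * fiberDiffMatrix R f s = 0 := by
  ext j x
  simp [fiberDiffMatrix, partitionMatrix, mul_apply, mul_sub, sum_sub_distrib, Pi.single_apply,
    hs (f x)]

theorem mulVec_fromCols_partitionMatrix_fiberDiffMatrix_injective [Fintype m] [IsDomain R]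
    [CharZero R] (hs : Function.RightInverse s f) :
    Function.Injective (fromCols (partitionMatrix R f) (fiberDiffMatrix R f s)).mulVec := by
  intro v w hvw
  rw [← sub_eq_zero, ← mulVec_sub, fromCols_mulVec] at hvw
  rw [← sub_eq_zero]
  set c := (v - w) ∘ Sum.inl
  set d := (v - w) ∘ Sum.inr
  have hc : c = 0 := by
    have h := congrArg ((partitionMatrix R f)ᵀ *ᵥ ·) hvw
    simp only [mulVec_add, mulVec_mulVec, transpose_partitionMatrix_mul_self,
      transpose_partitionMatrix_mul_fiberDiffMatrix hs, zero_mulVec, add_zero, mulVec_zero] at h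
    funext j
    have hj := congrFun h j
    rw [mulVec_diagonal, Pi.zero_apply, mul_eq_zero, Nat.cast_eq_zero,
      Finset.card_eq_zero, filter_eq_empty_iff] at hj
    exact hj.resolve_left fun h => h (mem_univ (s j)) (hs j)
  have hd : d = 0 := by
    rw [hc, mulVec_zero, zero_add] at hvw
    funext x
    have hx := congrFun hvw x.1
    have hxs : ∀ y, x.1 ≠ s y := fun y h => x.2 ⟨y, h.symm⟩
    simpa [fiberDiffMatrix, mulVec, dotProduct, sub_mul, sum_sub_distrib, Pi.single_apply, hxs,
      Subtype.coe_inj] using hx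
  ext (j | x)
  · exact congrFun hc j
  · exact congrFun hd x

end FiberDiff

section Charpoly

variable {n m k K : Type*} [Fintype n] [Fintype m] [Fintype k] [DecidableEq n] [DecidableEq m]
  [DecidableEq k] [Field K]

theorem charpoly_eq_of_mul_eq_mul {R : Type*} [CommRing R] {M B D : Matrix n n R} (hB : IsUnit B)
    (h : M * B = B * D) : M.charpoly = D.charpoly := by
  have hD : D = hB.unit.val⁻¹ * M * hB.unit.val := by
    rw [IsUnit.unit_spec, Matrix.mul_assoc, h, ← Matrix.mul_assoc,
      nonsing_inv_mul _ ((isUnit_iff_isUnit_det B).mp hB), Matrix.one_mul]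
  rw [hD, charpoly_units_conj']

theorem charpoly_eq_X_pow_mul_of_mul_fromCols (e : m ⊕ k ≃ n) {M : Matrix n n K}
    {P : Matrix n m K} {Z : Matrix n k K} {Q : Matrix m m K} (hP : M * P = P * Q)
    (hZ : M * Z = 0) (hPZ : Function.Injective (fromCols P Z).mulVec) :
    M.charpoly = X ^ Fintype.card k * Q.charpoly := by
  have hB : IsUnit ((fromCols P Z).submatrix e id) := by
    rw [← mulVec_injective_iff_isUnit]
    intro v w hvw
    simp only [← Equiv.coe_refl, submatrix_mulVec_equiv] at hvw
    exact hPZ (e.surjective.injective_comp_right hvw)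
  have hMPZ : M * fromCols P Z = fromCols P Z * fromBlocks Q 0 0 (0 : Matrix k k K) := by
    rw [mul_fromCols, hP, hZ, fromCols_mul_fromBlocks]
    simp
  have hMB : reindex e.symm e.symm M * (fromCols P Z).submatrix e id =
      (fromCols P Z).submatrix e id * fromBlocks Q 0 0 (0 : Matrix k k K) := by
    rw [reindex_apply, Equiv.symm_symm, submatrix_mul_equiv, hMPZ,
      submatrix_mul _ _ _ id _ Function.bijective_id, submatrix_id_id]
  rw [← charpoly_reindex e.symm M, charpoly_eq_of_mul_eq_mul hB hMB, charpoly_fromBlocks_zero₁₂,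
    charpoly_zero, mul_comm]

theorem charpoly_submatrix_of_surjective [CharZero K] (A : Matrix m m K) {f : n → m}
    (hf : Function.Surjective f) :
    (A.submatrix f f).charpoly =
      X ^ (Fintype.card n - Fintype.card m) *
        (A * diagonal fun j => (#{i | f i = j} : K)).charpoly := by
  classical
  have hs : Function.RightInverse (Function.surjInv hf) f := Function.surjInv_eq hf
  let e : m ⊕ ↥(Set.range (Function.surjInv hf))ᶜ ≃ n :=
    (Equiv.sumCongr (Equiv.ofInjective _ hs.injective) (Equiv.refl _)).trans
      (Equiv.Set.sumCompl _)
  rw [show Fintype.card n - Fintype.card m = Fintype.card ↥(Set.range (Function.surjInv hf))ᶜ by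
    rw [← Fintype.card_congr e, Fintype.card_sum]; omega]
  exact charpoly_eq_X_pow_mul_of_mul_fromCols e (submatrix_mul_partitionMatrix f A)
    (submatrix_mul_fiberDiffMatrix hs A)
    (mulVec_fromCols_partitionMatrix_fiberDiffMatrix_injective hs)

theorem spectrum_eq_of_charpoly_eq_X_pow_mul {M : Matrix n n K} {Q : Matrix m m K} {r : ℕ}
    (h : M.charpoly = X ^ r * Q.charpoly) (hQ : Q.det = 0) : spectrum K M = spectrum K Q := by
  have hQ0 : IsRoot Q.charpoly 0 := mem_spectrum_iff_isRoot_charpoly.1 <|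
    (spectrum.zero_mem_iff K).2 (by rw [isUnit_iff_isUnit_det, hQ]; exact not_isUnit_zero)
  ext μ
  simp only [mem_spectrum_iff_isRoot_charpoly, h, IsRoot.def, eval_mul, eval_pow, eval_X,
    mul_eq_zero]
  refine ⟨?_, .inr⟩
  rintro (hμ | hμ)
  · rwa [(pow_eq_zero_iff'.1 hμ).1]
  · exact hμ

end Charpoly

end Matrix

theorem Fin.card_filter_val_mem_Ico {N lo hi : ℕ} (h : hi ≤ N) (p : Fin N → Prop) [DecidablePred p]
    (hp : ∀ i, p i ↔ lo ≤ i.val ∧ i.val < hi) : #{i | p i} = hi - lo := by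
  rw [← card_map Fin.valEmbedding, ← Nat.card_Ico]
  congr 1
  ext n
  simp only [mem_map, mem_filter, mem_univ, true_and, Fin.valEmbedding_apply, hp, mem_Ico]
  exact ⟨by rintro ⟨i, hi, rfl⟩; exact hi, fun hn => ⟨⟨n, by omega⟩, hn, rfl⟩⟩

namespace PendantTriangle

def cell (a : ℕ) (i : Fin (a + 4)) : Fin 5 :=
  ⟨if i.val = 0 then 0 else if i.val = 1 then 1 else if i.val = 2 then 2
    else if i.val ≤ a + 2 then 3 else 4, by split_ifs <;> omega⟩

def cellWeights (w₁ w₂ w₃ w₄ w₅ : ℂ) : Matrix (Fin 5) (Fin 5) ℂ :=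
  !![0, w₁, w₂, w₃, 0;
     w₁, 0, w₄, 0, w₅;
     w₂, w₄, 0, 0, 0;
     w₃, 0, 0, 0, 0;
     0, w₅, 0, 0, 0]

theorem cell_eq_iff {a : ℕ} (i : Fin (a + 4)) (j : Fin 5) :
    cell a i = j ↔ ![0, 1, 2, 3, a + 3] j ≤ i.val ∧ i.val < ![1, 2, 3, a + 3, a + 4] j := by
  simp only [Fin.ext_iff, cell]
  fin_cases j <;> simp [-Fin.val_eq_zero_iff] <;> grind

theorem cell_surjective {a : ℕ} (ha : 0 < a) : Function.Surjective (cell a) := by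
  intro j
  refine ⟨⟨![0, 1, 2, 3, a + 3] j, by fin_cases j <;> simp⟩, (cell_eq_iff _ _).2 ?_⟩
  fin_cases j <;> simp [ha]

theorem card_cell_fiber (a : ℕ) (j : Fin 5) :
    (#{i | cell a i = j} : ℂ) = ![1, 1, 1, (a : ℂ), 1] j := by
  rw [Fin.card_filter_val_mem_Ico (by fin_cases j <;> simp) _ (cell_eq_iff · j)]
  fin_cases j <;> simp

theorem cellWeights_submatrix_cell_apply (a : ℕ) (w₁ w₂ w₃ w₄ w₅ : ℂ) (i j : Fin (a + 4)) :
    (cellWeights w₁ w₂ w₃ w₄ w₅).submatrix (cell a) (cell a) i j =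
      if (i.val = 0 ∧ j.val = 1) ∨ (i.val = 1 ∧ j.val = 0) then w₁
      else if (i.val = 0 ∧ j.val = 2) ∨ (i.val = 2 ∧ j.val = 0) then w₂
      else if (i.val = 0 ∧ 3 ≤ j.val ∧ j.val ≤ a + 2) ∨
              (j.val = 0 ∧ 3 ≤ i.val ∧ i.val ≤ a + 2) then w₃
      else if (i.val = 1 ∧ j.val = 2) ∨ (i.val = 2 ∧ j.val = 1) then w₄
      else if (i.val = 1 ∧ j.val = a + 3) ∨ (j.val = 1 ∧ i.val = a + 3) then w₅
      else 0 := by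
  have hi := (cell_eq_iff i (cell a i)).1 rfl
  have hj := (cell_eq_iff j (cell a j)).1 rfl
  rw [submatrix_apply]
  generalize cell a i = ci at hi ⊢
  generalize cell a j = cj at hj ⊢
  fin_cases ci <;> fin_cases cj <;> simp [-Fin.val_eq_zero_iff] at hi hj <;> split_ifs <;>
    first | omega | rfl

/-- Columns 2, 3, 4 of `cellWeights` lie in `span {e₀, e₁}`, so it factors through a matrix with
a zero row. -/
theorem det_cellWeights (w₁ w₂ w₃ w₄ w₅ : ℂ) : (cellWeights w₁ w₂ w₃ w₄ w₅).det = 0 := by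
  have h : cellWeights w₁ w₂ w₃ w₄ w₅ =
      !![0, w₁, 1, 0, 0; w₁, 0, 0, 1, 0; w₂, w₄, 0, 0, 0; w₃, 0, 0, 0, 0; 0, w₅, 0, 0, 0] *
        !![1, 0, 0, 0, 0; 0, 1, 0, 0, 0; 0, 0, w₂, w₃, 0; 0, 0, w₄, 0, w₅; 0, 0, 0, 0, 0] := by
    ext i j
    fin_cases i <;> fin_cases j <;> simp [cellWeights, mul_apply, Fin.sum_univ_succ]
  rw [h, det_mul, mul_eq_zero]
  exact .inr (det_eq_zero_of_row_eq_zero 4 fun j => by fin_cases j <;> rfl)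

end PendantTriangle

open PendantTriangle

/-- Proposition 5.1: for the weighted adjacency matrix `M` of the graph obtained
from `K₃` by attaching `a` pendant vertices at one vertex and one pendant vertex at
another, the equitable quotient matrix `Q` of order 5 (for the partition
`{{u},{v},{w},{pendants},{b}}`) satisfies `charpoly M = X^(a-1) · charpoly Q` and
contains all the distinct eigenvalues of `M`. -/
theorem weighted_adjacency_quotient_contains_all (a : ℕ) (ha : 2 ≤ a)
    (w₁ w₂ w₃ w₄ w₅ : ℂ)
    (M : Matrix (Fin (a + 4)) (Fin (a + 4)) ℂ)
    (hM : ∀ i j : Fin (a + 4), M i j =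
      if (i.val = 0 ∧ j.val = 1) ∨ (i.val = 1 ∧ j.val = 0) then w₁
      else if (i.val = 0 ∧ j.val = 2) ∨ (i.val = 2 ∧ j.val = 0) then w₂
      else if (i.val = 0 ∧ 3 ≤ j.val ∧ j.val ≤ a + 2) ∨
              (j.val = 0 ∧ 3 ≤ i.val ∧ i.val ≤ a + 2) then w₃
      else if (i.val = 1 ∧ j.val = 2) ∨ (i.val = 2 ∧ j.val = 1) then w₄
      else if (i.val = 1 ∧ j.val = a + 3) ∨ (j.val = 1 ∧ i.val = a + 3) then w₅
      else 0)
    (P : Matrix (Fin (a + 4)) (Fin 5) ℂ)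
    (hP : ∀ i j, P i j =
      if (if i.val = 0 then (0 : ℕ) else if i.val = 1 then 1 else if i.val = 2 then 2
          else if i.val ≤ a + 2 then 3 else 4) = j.val then 1 else 0)
    (Q : Matrix (Fin 5) (Fin 5) ℂ)
    (hQ : Q = !![0, w₁, w₂, (a : ℂ) * w₃, 0;
                 w₁, 0, w₄, 0, w₅;
                 w₂, w₄, 0, 0, 0;
                 w₃, 0, 0, 0, 0;
                 0, w₅, 0, 0, 0]) :
    M * P = P * Q ∧
      M.charpoly = X ^ (a - 1) * Q.charpoly ∧
      spectrum ℂ M = spectrum ℂ Q := by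
  have hM' : M = (cellWeights w₁ w₂ w₃ w₄ w₅).submatrix (cell a) (cell a) := by
    ext i j
    rw [hM, cellWeights_submatrix_cell_apply]
  have hP' : P = partitionMatrix ℂ (cell a) := by
    ext i j
    rw [hP]
    exact if_congr (Fin.ext_iff (a := cell a i)).symm rfl rfl
  have hQ' : Q = cellWeights w₁ w₂ w₃ w₄ w₅ * diagonal fun j => (#{i | cell a i = j} : ℂ) := by
    ext s t
    rw [mul_diagonal, card_cell_fiber, hQ]
    fin_cases s <;> fin_cases t <;> simp [cellWeights, mul_comm]
  have hchar : M.charpoly = X ^ (a - 1) * Q.charpoly := by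
    rw [hM', hQ', charpoly_submatrix_of_surjective _ (cell_surjective (by omega)),
      Fintype.card_fin, Fintype.card_fin, show a + 4 - 5 = a - 1 by omega]
  -- Passing `hchar` itself makes the unifier compare the `CommRing ℂ` instance with
  -- `Field.toCommRing` under `*` and exceed the recursion limit; `rw` matches up to instances.
  refine ⟨?_, hchar, spectrum_eq_of_charpoly_eq_X_pow_mul (by rw [hchar]) ?_⟩
  · rw [hM', hP', hQ']
    exact submatrix_mul_partitionMatrix _ _
  · rw [hQ', det_mul, det_cellWeights, zero_mul]
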